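/- Let A be a natural number and ℓ a prime. Then it is impossible that all three numbers A, A - 4ℓ, and A - 8ℓ are perfect squares in ℤ (assuming A ≥ 8ℓ so all are nonnegative). -/

import Mathlib

/-!
Two consecutive differences `x² - y² = y² - z² = 4ℓ` of squares force `3 ∣ 4ℓ`, because the
squares modulo 3 are only `0` and `1`; hence `ℓ = 3`. But no three squares are in arithmetic
progression with common difference `12`, as one sees modulo 16.
-/

theorem ZMod.sq_sub_sq_eq_zero_of_sq_sub_sq_eq :
    ∀ u v w : ZMod 3, u ^ 2 - v ^ 2 = v ^ 2 - w ^ 2 → u ^ 2 - v ^ 2 = 0 := by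
  decide

theorem ZMod.not_sq_sub_sq_eq_twelve :
    ∀ u v w : ZMod 16, ¬(u ^ 2 - v ^ 2 = 12 ∧ v ^ 2 - w ^ 2 = 12) := by
  decide

theorem Int.three_dvd_sq_sub_sq_of_sq_sub_sq_eq {x y z : ℤ} (h : x ^ 2 - y ^ 2 = y ^ 2 - z ^ 2) :
    3 ∣ x ^ 2 - y ^ 2 := by
  apply (ZMod.intCast_zmod_eq_zero_iff_dvd _ 3).mp
  have h3 := congrArg ((↑) : ℤ → ZMod 3) h
  push_cast at h3 ⊢
  exact ZMod.sq_sub_sq_eq_zero_of_sq_sub_sq_eq _ _ _ h3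

theorem Int.not_sq_sub_sq_eq_twelve (x y z : ℤ) :
    ¬(x ^ 2 - y ^ 2 = 12 ∧ y ^ 2 - z ^ 2 = 12) := by
  rintro ⟨hxy, hyz⟩
  apply ZMod.not_sq_sub_sq_eq_twelve x y z
  constructor
  · exact_mod_cast congrArg ((↑) : ℤ → ZMod 16) hxy
  · exact_mod_cast congrArg ((↑) : ℤ → ZMod 16) hyz

theorem stmt0_general (A ℓ : ℕ) (hℓ : Nat.Prime ℓ) :
    ¬ ((∃ x : ℤ, (A : ℤ) = x ^ 2) ∧ (∃ y : ℤ, (A : ℤ) - 4 * ℓ = y ^ 2) ∧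
       (∃ z : ℤ, (A : ℤ) - 8 * ℓ = z ^ 2)) := by
  rintro ⟨⟨x, hx⟩, ⟨y, hy⟩, ⟨z, hz⟩⟩
  have hxy : x ^ 2 - y ^ 2 = 4 * ℓ := by linarith
  have hyz : y ^ 2 - z ^ 2 = 4 * ℓ := by linarith
  have h3 : 3 ∣ 4 * ℓ := by
    exact_mod_cast hxy ▸ Int.three_dvd_sq_sub_sq_of_sq_sub_sq_eq (hxy.trans hyz.symm)
  have hℓ3 : ℓ = 3 :=
    ((Nat.prime_dvd_prime_iff_eq Nat.prime_three hℓ).mp (by omega)).symm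
  subst hℓ3
  norm_num at hxy hyz
  exact Int.not_sq_sub_sq_eq_twelve x y z ⟨hxy, hyz⟩

/-- Let `A` be a natural number and `ℓ` a prime with `8*ℓ ≤ A`. Then `A`, `A - 4ℓ` and
`A - 8ℓ` cannot all be perfect squares in `ℤ`. -/
theorem stmt0 (A ℓ : ℕ) (hℓ : Nat.Prime ℓ) (hA : 8 * ℓ ≤ A) :
    ¬ ((∃ x : ℤ, (A : ℤ) = x ^ 2) ∧ (∃ y : ℤ, (A : ℤ) - 4 * ℓ = y ^ 2) ∧
       (∃ z : ℤ, (A : ℤ) - 8 * ℓ = z ^ 2)) :=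
  stmt0_general A ℓ hℓ
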